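/- Stress bound in the abstract existence theorem: Under the hypotheses of the abstract existence theorem, if z ∈ Z solves a(z,x)+c(z,z,x) = F(x) for all x ∈ Z with ‖z‖ ≤ ‖F‖/c_a, and S ∈ 𝕊 satisfies b(S,x) = a(z,x)+c(z,z,x)-F(x) for all x ∈ X, then ‖S‖_𝕊 ≤ (1/c_b)(1 + C_a/c_a + (C_c/c_a²)‖F‖)‖F‖, where C_a and C_c are the continuity constants of a and c. -/

import Mathlib

/-!
Testing the inf-sup condition against unit vectors `x` gives `c_b ‖S‖ ≤ b(S,x) + ε`, and
`b(S,x) = a(z,x) + c(z,z,x) - F(x)` is at most `C_a ‖z‖ + C_c ‖z‖² + ‖F‖` by continuity of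
`a`, `c` and `F`. Inserting the a priori bound `‖z‖ ≤ ‖F‖ / c_a` and letting `ε → 0` gives the claim.
-/

theorem le_of_forall_pos_exists_le_add {ι : Type*} {P : ι → Prop} {f : ι → ℝ} {t M : ℝ}
    (happrox : ∀ ε > 0, ∃ i, P i ∧ t ≤ f i + ε) (hle : ∀ i, P i → f i ≤ M) : t ≤ M := by
  refine le_of_forall_pos_le_add fun ε hε => ?_
  obtain ⟨i, hi, hti⟩ := happrox ε hε
  linarith [hle i hi]

theorem nonneg_of_abs_le_mul_norm_pow {E : Type*} [NormedAddCommGroup E] [Nontrivial E]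
    {f : E → ℝ} {C : ℝ} (n : ℕ) (h : ∀ x, |f x| ≤ C * ‖x‖ ^ n) : 0 ≤ C := by
  obtain ⟨x, hx⟩ := exists_ne (0 : E)
  exact nonneg_of_mul_nonneg_left ((abs_nonneg _).trans (h x)) (by positivity)

section Residual

variable {X : Type*} [NormedAddCommGroup X] [NormedSpace ℝ X]
  {a : X → X → ℝ} {c : X → X → X → ℝ} {F : X →L[ℝ] ℝ} {ca Ca Cc : ℝ} {z x : X}

theorem residual_le_of_nonneg (hca : 0 < ca) (hCa0 : 0 ≤ Ca) (hCc0 : 0 ≤ Cc)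
    (hCa : ∀ x y : X, |a x y| ≤ Ca * ‖x‖ * ‖y‖)
    (hCc : ∀ z₁ z₂ x : X, |c z₁ z₂ x| ≤ Cc * ‖z₁‖ * ‖z₂‖ * ‖x‖)
    (hznorm : ‖z‖ ≤ ‖F‖ / ca) (hx : ‖x‖ ≤ 1) :
    a z x + c z z x - F x ≤ (1 + Ca / ca + (Cc / ca ^ 2) * ‖F‖) * ‖F‖ := by
  have hFx : -F x ≤ ‖F‖ * ‖x‖ := (neg_le_abs _).trans (F.le_opNorm x)
  calc a z x + c z z x - F x
      ≤ Ca * ‖z‖ * ‖x‖ + Cc * ‖z‖ * ‖z‖ * ‖x‖ + ‖F‖ * ‖x‖ := by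
        linarith [(le_abs_self _).trans (hCa z x), (le_abs_self _).trans (hCc z z x)]
    _ ≤ Ca * ‖z‖ * 1 + Cc * ‖z‖ * ‖z‖ * 1 + ‖F‖ * 1 := by gcongr
    _ ≤ Ca * (‖F‖ / ca) + Cc * (‖F‖ / ca) * (‖F‖ / ca) + ‖F‖ := by
        simp only [mul_one]; gcongr
    _ = (1 + Ca / ca + (Cc / ca ^ 2) * ‖F‖) * ‖F‖ := by ring

theorem residual_le (hca : 0 < ca)
    (hCa : ∀ x y : X, |a x y| ≤ Ca * ‖x‖ * ‖y‖)
    (hCc : ∀ z₁ z₂ x : X, |c z₁ z₂ x| ≤ Cc * ‖z₁‖ * ‖z₂‖ * ‖x‖)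
    (hznorm : ‖z‖ ≤ ‖F‖ / ca) (hx : ‖x‖ ≤ 1) :
    a z x + c z z x - F x ≤ (1 + Ca / ca + (Cc / ca ^ 2) * ‖F‖) * ‖F‖ := by
  rcases subsingleton_or_nontrivial X with hX | hX
  · -- On the zero space the continuity constants may be negative, but everything vanishes.
    obtain rfl := Subsingleton.elim x 0
    have ha : a z 0 = 0 := abs_nonpos_iff.mp (by simpa using hCa z 0)
    have hc : c z z 0 = 0 := abs_nonpos_iff.mp (by simpa using hCc z z 0)
    simp [ha, hc, Subsingleton.elim F 0]
  · have hCa0 : 0 ≤ Ca := nonneg_of_abs_le_mul_norm_pow 2 fun x => by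
      simpa [sq, mul_assoc] using hCa x x
    have hCc0 : 0 ≤ Cc := nonneg_of_abs_le_mul_norm_pow 3 fun x => by
      simpa [pow_succ, mul_assoc] using hCc x x x
    exact residual_le_of_nonneg hca hCa0 hCc0 hCa hCc hznorm hx

end Residual

theorem stmt_14_general {X 𝕊 : Type*}
    [NormedAddCommGroup X] [NormedSpace ℝ X]
    [NormedAddCommGroup 𝕊] [NormedSpace ℝ 𝕊]
    (a : X → X → ℝ) (b : 𝕊 → X → ℝ) (c : X → X → X → ℝ)
    (F : X →L[ℝ] ℝ)
    (ca cb Ca Cc : ℝ) (hca : 0 < ca) (hcb : 0 < cb)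
    (hCa : ∀ x y : X, |a x y| ≤ Ca * ‖x‖ * ‖y‖)
    (hCc : ∀ z₁ z₂ x : X, |c z₁ z₂ x| ≤ Cc * ‖z₁‖ * ‖z₂‖ * ‖x‖)
    (hinfsup : ∀ S : 𝕊, ∀ ε > 0, ∃ x : X, ‖x‖ ≤ 1 ∧ cb * ‖S‖ ≤ b S x + ε)
    (z : X) (hznorm : ‖z‖ ≤ ‖F‖ / ca)
    (S : 𝕊) (hS : ∀ x : X, b S x = a z x + c z z x - F x) :
    ‖S‖ ≤ (1 / cb) * (1 + Ca / ca + (Cc / ca^2) * ‖F‖) * ‖F‖ := by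
  have hstress : cb * ‖S‖ ≤ (1 + Ca / ca + (Cc / ca ^ 2) * ‖F‖) * ‖F‖ :=
    le_of_forall_pos_exists_le_add (hinfsup S) fun x hx =>
      (hS x).trans_le (residual_le hca hCa hCc hznorm hx)
  calc ‖S‖ = (1 / cb) * (cb * ‖S‖) := by field_simp
    _ ≤ (1 / cb) * ((1 + Ca / ca + (Cc / ca ^ 2) * ‖F‖) * ‖F‖) := by gcongr
    _ = (1 / cb) * (1 + Ca / ca + (Cc / ca^2) * ‖F‖) * ‖F‖ := by ring

/-- Stress bound in the abstract existence theorem: if `z ∈ Z` satisfies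
`‖z‖ ≤ ‖F‖/c_a` and `S` satisfies `b(S,x) = a(z,x) + c(z,z,x) - F(x)` for all `x`,
then `‖S‖ ≤ (1/c_b)(1 + C_a/c_a + (C_c/c_a²)‖F‖)‖F‖`. -/
theorem stmt_14 {X 𝕊 : Type*}
    [NormedAddCommGroup X] [NormedSpace ℝ X]
    [NormedAddCommGroup 𝕊] [NormedSpace ℝ 𝕊]
    (a : X → X → ℝ) (b : 𝕊 → X → ℝ) (c : X → X → X → ℝ)
    (Z : Set X) (hZ : Z = {x : X | ∀ T : 𝕊, b T x = 0})
    (F : X →L[ℝ] ℝ)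
    (ca cb Ca Cc : ℝ) (hca : 0 < ca) (hcb : 0 < cb)
    (hCa : ∀ x y : X, |a x y| ≤ Ca * ‖x‖ * ‖y‖)
    (hCc : ∀ z₁ z₂ x : X, |c z₁ z₂ x| ≤ Cc * ‖z₁‖ * ‖z₂‖ * ‖x‖)
    (hinfsup : ∀ S : 𝕊, ∀ ε > 0, ∃ x : X, ‖x‖ ≤ 1 ∧ cb * ‖S‖ ≤ b S x + ε)
    (z : X) (hz : z ∈ Z) (hznorm : ‖z‖ ≤ ‖F‖ / ca)
    (hzsol : ∀ x ∈ Z, a z x + c z z x = F x)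
    (S : 𝕊) (hS : ∀ x : X, b S x = a z x + c z z x - F x) :
    ‖S‖ ≤ (1 / cb) * (1 + Ca / ca + (Cc / ca^2) * ‖F‖) * ‖F‖ :=
  stmt_14_general a b c F ca cb Ca Cc hca hcb hCa hCc hinfsup z hznorm S hS
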